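/- arXiv:1806.07515 — 3 statements merged into one kernel-verified Lean document; each statement's English description precedes it below -/
import Mathlib

section
/- Let F be a finite extension of ℚ_p with set of ℚ_p-embeddings Γ_F into an algebraic closure of ℚ_p, and let (n_σ)_{σ∈Γ_F} be a family of integers. If there exists an open subgroup U of the unit group of the ring of integers of F such that ∏_{σ∈Γ_F} σ(x)^{n_σ} = 1 for all x ∈ U, then n_σ = 0 for all σ ∈ Γ_F. -/
/-!
Choose `w ≠ 0` in `F` on which the embeddings take pairwise distinct values (a primitive element,
or `1` plus one). For small `c ∈ ℚ_p` the element `1 + c w` lies in the image of `U`; writing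
`n = n⁺ - n⁻`, the polynomials `∏_σ (1 + σ(w) X)^{n⁺_σ}` and `∏_σ (1 + σ(w) X)^{n⁻_σ}` over
`\bar ℚ_p` then agree at infinitely many points, hence coincide, and the multiplicity of the root
`-σ(w)⁻¹` gives `n⁺_σ = n⁻_σ`.
-/
open Polynomial

theorem prod_zpow_eq_one_iff_prod_pow_toNat_eq {ι G₀ : Type*} [Fintype ι] [CommGroupWithZero G₀]
    {x : ι → G₀} (hx : ∀ i, x i ≠ 0) (n : ι → ℤ) :
    ∏ i, x i ^ n i = 1 ↔ ∏ i, x i ^ (n i).toNat = ∏ i, x i ^ (-n i).toNat := by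
  have hsplit : ∏ i, x i ^ n i = (∏ i, x i ^ (n i).toNat) / ∏ i, x i ^ (-n i).toNat := by
    rw [← Finset.prod_div_distrib]
    refine Finset.prod_congr rfl fun i _ => ?_
    rw [← zpow_natCast, ← zpow_natCast, ← zpow_sub₀ (hx i), Int.toNat_sub_toNat_neg]
  rw [hsplit, div_eq_one_iff_eq (Finset.prod_ne_zero_iff.mpr fun i _ => pow_ne_zero _ (hx i))]

theorem Polynomial.count_roots_prod_C_mul_X_add_one_pow {ι L : Type*} [Fintype ι] [Field L]
    [DecidableEq L] {v : ι → L} (hv : Function.Injective v) (hv0 : ∀ i, v i ≠ 0) (a : ι → ℕ)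
    (j : ι) : (∏ i, (C (v i) * X + 1) ^ a i).roots.count (-(v j)⁻¹) = a j := by
  classical
  have hfactor : ∀ i, C (v i) * X + 1 ≠ 0 := fun i h => by simpa using congrArg (eval 0) h
  have hroots : ∀ i, (C (v i) * X + 1).roots = {-(v i)⁻¹} := fun i => by
    simpa using roots_C_mul_X_add_C 1 (hv0 i)
  rw [roots_prod _ _ (Finset.prod_ne_zero_iff.mpr fun i _ => pow_ne_zero _ (hfactor i))]
  simp [hroots, Multiset.count_bind, Multiset.count_singleton, hv.eq_iff]

theorem Polynomial.eq_of_prod_C_mul_X_add_one_pow_eq {ι L : Type*} [Fintype ι] [Field L]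
    {v : ι → L} (hv : Function.Injective v) (hv0 : ∀ i, v i ≠ 0) {a b : ι → ℕ}
    (h : ∏ i, (C (v i) * X + 1) ^ a i = ∏ i, (C (v i) * X + 1) ^ b i) : a = b := by
  classical
  funext j
  rw [← count_roots_prod_C_mul_X_add_one_pow hv hv0 a j, h,
    count_roots_prod_C_mul_X_add_one_pow hv hv0 b j]

theorem AlgHom.eq_zero_of_prod_apply_zpow_eq_one {K F L : Type*} [Field K] [Field F] [Field L]
    [Algebra K F] [Algebra K L] [Fintype (F →ₐ[K] L)] {w : F} (hw0 : w ≠ 0)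
    (hw : Function.Injective fun σ : F →ₐ[K] L => σ w) {S : Set K} (hS : S.Infinite)
    (n : (F →ₐ[K] L) → ℤ) (hS0 : ∀ c ∈ S, 1 + c • w ≠ 0)
    (h : ∀ c ∈ S, ∏ σ : F →ₐ[K] L, σ (1 + c • w) ^ n σ = 1) (σ : F →ₐ[K] L) : n σ = 0 := by
  have heval : ∀ (m : (F →ₐ[K] L) → ℕ) (c : K),
      (∏ τ : F →ₐ[K] L, (C (τ w) * X + 1) ^ m τ).eval (algebraMap K L c) =
        ∏ τ, τ (1 + c • w) ^ m τ := by
    intro m c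
    rw [eval_prod]
    refine Finset.prod_congr rfl fun τ _ => ?_
    simp only [eval_pow, eval_add, eval_mul, eval_C, eval_X, eval_one, map_add, map_one,
      Algebra.smul_def, map_mul, AlgHom.commutes]
    ring
  have hpoly : ∏ τ : F →ₐ[K] L, (C (τ w) * X + 1) ^ (n τ).toNat =
      ∏ τ, (C (τ w) * X + 1) ^ (-n τ).toNat := by
    rw [← sub_eq_zero]
    apply eq_zero_of_infinite_isRoot
    refine (hS.image (algebraMap K L).injective.injOn).mono ?_
    rintro _ ⟨c, hc, rfl⟩
    have hne : ∀ τ : F →ₐ[K] L, τ (1 + c • w) ≠ 0 := fun τ => (map_ne_zero τ).mpr (hS0 c hc)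
    rw [Set.mem_ofPred_eq, IsRoot, eval_sub, heval, heval,
      (prod_zpow_eq_one_iff_prod_pow_toNat_eq hne n).mp (h c hc), sub_self]
  have hσ := congrFun
    (eq_of_prod_C_mul_X_add_one_pow_eq hw (fun τ => (map_ne_zero τ).mpr hw0) hpoly) σ
  omega

theorem exists_ne_zero_injective_algHom_apply (K F L : Type*) [Field K] [Field F] [Field L]
    [Algebra K F] [Algebra K L] [FiniteDimensional K F] [Algebra.IsSeparable K F] [IsAlgClosed L] :
    ∃ w : F, w ≠ 0 ∧ Function.Injective fun σ : F →ₐ[K] L => σ w := by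
  obtain ⟨α, hα⟩ := Field.exists_primitive_element K F
  have hinj := (Field.primitive_element_iff_algHom_eq_of_eval' K L
    (fun x => IsAlgClosed.splits _) α).mp hα
  by_cases hα0 : α = 0
  · refine ⟨α + 1, by simp [hα0], fun σ τ hστ => hinj ?_⟩
    simpa using hστ
  · exact ⟨α, hα0, hinj⟩

theorem stmt_0_general (p : ℕ) [Fact p.Prime] (F : Type) [NormedField F] [Algebra ℚ_[p] F]
    [FiniteDimensional ℚ_[p] F]
    (hnorm : ∀ x : ℚ_[p], ‖algebraMap ℚ_[p] F x‖ = ‖x‖)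
    [Algebra ℤ_[p] F]
    (n : (F →ₐ[ℚ_[p]] AlgebraicClosure ℚ_[p]) → ℤ)
    (U : Subgroup (integralClosure ℤ_[p] F)ˣ)
    (hUopen : IsOpen ((fun u : (integralClosure ℤ_[p] F)ˣ =>
      ((u : integralClosure ℤ_[p] F) : F)) '' (U : Set (integralClosure ℤ_[p] F)ˣ)))
    (h : ∀ u ∈ U, ∏ σ : F →ₐ[ℚ_[p]] AlgebraicClosure ℚ_[p],
      σ (((u : (integralClosure ℤ_[p] F)ˣ) : integralClosure ℤ_[p] F) : F) ^ n σ = 1) :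
    ∀ σ, n σ = 0 := by
  set V : Set F := (fun u : (integralClosure ℤ_[p] F)ˣ =>
    ((u : integralClosure ℤ_[p] F) : F)) '' (U : Set (integralClosure ℤ_[p] F)ˣ)
  obtain ⟨ε, hε, hball⟩ := Metric.isOpen_iff.mp hUopen 1 ⟨1, U.one_mem, rfl⟩
  obtain ⟨w, hw0, hw⟩ := exists_ne_zero_injective_algHom_apply ℚ_[p] F (AlgebraicClosure ℚ_[p])
  have hS : ∀ c ∈ Metric.ball (0 : ℚ_[p]) (ε / ‖w‖), 1 + c • w ∈ V := by
    intro c hc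
    apply hball
    rw [mem_ball_zero_iff, lt_div_iff₀ (norm_pos_iff.mpr hw0)] at hc
    rwa [Metric.mem_ball, dist_eq_norm, add_sub_cancel_left, Algebra.smul_def, norm_mul, hnorm]
  have hball_infinite : (Metric.ball (0 : ℚ_[p]) (ε / ‖w‖)).Infinite :=
    infinite_of_mem_nhds 0 (Metric.ball_mem_nhds 0 (div_pos hε (norm_pos_iff.mpr hw0)))
  refine AlgHom.eq_zero_of_prod_apply_zpow_eq_one hw0 hw hball_infinite n ?_ ?_
  · intro c hc
    obtain ⟨u, -, hu⟩ := hS c hc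
    exact hu ▸ (u.isUnit.map (integralClosure ℤ_[p] F).val).ne_zero
  · intro c hc
    obtain ⟨u, hu, hu'⟩ := hS c hc
    exact hu' ▸ h u hu

/-- Let `F` be a finite extension of `ℚ_p` (with its canonical `p`-adic normed
field topology, expressed here by a normed field structure extending the one of `ℚ_p`),
`Γ_F` the set of `ℚ_p`-embeddings of `F` into an algebraic closure of `ℚ_p`, and
`(n_σ)` a family of integers.  If there is an open subgroup `U` of the unit group of the
ring of integers of `F` with `∏_σ σ(x)^{n_σ} = 1` for all `x ∈ U`, then all `n_σ = 0`. -/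
theorem stmt_0 (p : ℕ) [Fact p.Prime] (F : Type) [NormedField F] [Algebra ℚ_[p] F]
    [FiniteDimensional ℚ_[p] F]
    (hnorm : ∀ x : ℚ_[p], ‖algebraMap ℚ_[p] F x‖ = ‖x‖)
    [Algebra ℤ_[p] F] [IsScalarTower ℤ_[p] ℚ_[p] F]
    (n : (F →ₐ[ℚ_[p]] AlgebraicClosure ℚ_[p]) → ℤ)
    (U : Subgroup (integralClosure ℤ_[p] F)ˣ)
    (hUopen : IsOpen ((fun u : (integralClosure ℤ_[p] F)ˣ =>
      ((u : integralClosure ℤ_[p] F) : F)) '' (U : Set (integralClosure ℤ_[p] F)ˣ)))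
    (h : ∀ u ∈ U, ∏ σ : F →ₐ[ℚ_[p]] AlgebraicClosure ℚ_[p],
      σ (((u : (integralClosure ℤ_[p] F)ˣ) : integralClosure ℤ_[p] F) : F) ^ n σ = 1) :
    ∀ σ, n σ = 0 :=
  stmt_0_general p F hnorm n U hUopen h
end

section
/- Every continuous group homomorphism from p^m ℤ_p (for m > 0) to the multiplicative group of an algebraically closed field complete with respect to a p-adic absolute value (e.g. \bar{ℚ}_p^×) extends to a continuous homomorphism ℤ_p → \bar{ℚ}_p^×. -/
/-!
The subgroup `p^m ℤ_p` is open in `ℤ_p`, and `Lˣ` is divisible because `L` is algebraically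
closed, i.e. `Additive Lˣ` is an injective `ℤ`-module. So `φ` extends algebraically to `ℤ_p`
by Baer's criterion, and any such extension is continuous, being continuous on an open subgroup.
-/

open Multiplicative

theorem IsAlgClosed.zpow_surjective_units {K : Type*} [Field K] [IsAlgClosed K] {n : ℤ}
    (hn : n ≠ 0) : Function.Surjective fun x : Kˣ ↦ x ^ n := by
  intro a
  obtain ⟨k, rfl | rfl⟩ := Int.eq_nat_or_neg n
  · obtain ⟨z, hz⟩ := IsAlgClosed.exists_pow_nat_eq (a : K) (by omega : 0 < k)
    refine ⟨Units.mk0 z fun hz0 ↦ a.ne_zero ?_, by ext; simp [hz]⟩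
    rw [← hz, hz0, zero_pow (by omega)]
  · obtain ⟨z, hz⟩ := IsAlgClosed.exists_pow_nat_eq (a⁻¹ : Kˣ).val (by omega : 0 < k)
    refine ⟨Units.mk0 z fun hz0 ↦ a⁻¹.ne_zero ?_, by ext; simp [hz]⟩
    rw [← hz, hz0, zero_pow (by omega)]

noncomputable instance IsAlgClosed.divisibleByAdditiveUnits {K : Type*} [Field K] [IsAlgClosed K] :
    DivisibleBy (Additive Kˣ) ℤ :=
  divisibleByOfSMulRightSurj _ _ fun hn a ↦ IsAlgClosed.zpow_surjective_units hn a.toMul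

theorem AddSubgroup.exists_monoidHom_extension {G D : Type*} [AddCommGroup G] [CommGroup D]
    [DivisibleBy (Additive D) ℤ] (H : AddSubgroup G) (φ : Multiplicative H →* D) :
    ∃ ψ : Multiplicative G →* D, ∀ x : H, ψ (ofAdd (x : G)) = φ (ofAdd x) := by
  obtain ⟨ψ, hψ⟩ := (Module.Baer.of_divisible (Additive D)).extension_property_addMonoidHom
    H.subtype Subtype.val_injective φ.toAdditiveRight
  exact ⟨ψ.toMultiplicativeLeft, fun x ↦ DFunLike.congr_fun hψ x⟩

theorem MonoidHom.continuous_of_isOpen_of_continuous_subtype {G M : Type*} [AddGroup G]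
    [TopologicalSpace G] [IsTopologicalAddGroup G] [Monoid M] [TopologicalSpace M] [ContinuousMul M]
    {H : AddSubgroup G} (hH : IsOpen (H : Set G)) (ψ : Multiplicative G →* M)
    (hψ : Continuous fun x : H ↦ ψ (ofAdd (x : G))) : Continuous ψ :=
  continuous_of_continuousAt_one ψ <|
    (hH.isOpenEmbedding_subtypeVal.continuousAt_iff (x := (0 : H))).mp hψ.continuousAt

theorem PadicInt.isOpen_range_mulLeft_pow (p : ℕ) [Fact p.Prime] (m : ℕ) :
    IsOpen ((AddMonoidHom.mulLeft ((p : ℤ_[p]) ^ m)).range : Set ℤ_[p]) := by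
  have hball : Metric.closedBall (0 : ℤ_[p]) ((p : ℝ) ^ (-(m : ℤ))) ⊆
      (AddMonoidHom.mulLeft ((p : ℤ_[p]) ^ m)).range := by
    intro x hx
    rw [mem_closedBall_zero_iff, norm_le_pow_iff_mem_span_pow, Ideal.mem_span_singleton] at hx
    obtain ⟨c, rfl⟩ := hx
    exact ⟨c, rfl⟩
  exact AddSubgroup.isOpen_of_mem_nhds _ (Filter.mem_of_superset
    (Metric.closedBall_mem_nhds 0 (zpow_pos (by exact_mod_cast (Fact.out : p.Prime).pos) _)) hball)

theorem stmt_3_general (p : ℕ) [Fact p.Prime] (m : ℕ)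
    (L : Type) [NormedField L] [IsAlgClosed L]
    (φ : Multiplicative ((AddMonoidHom.mulLeft ((p : ℤ_[p]) ^ m)).range) →* Lˣ)
    (hφ : Continuous φ) :
    ∃ ψ : Multiplicative ℤ_[p] →* Lˣ, Continuous ψ ∧
      ∀ x : (AddMonoidHom.mulLeft ((p : ℤ_[p]) ^ m)).range,
        ψ (Multiplicative.ofAdd (x : ℤ_[p])) = φ (Multiplicative.ofAdd x) := by
  obtain ⟨ψ, hψ⟩ := AddSubgroup.exists_monoidHom_extension _ φ
  refine ⟨ψ, MonoidHom.continuous_of_isOpen_of_continuous_subtype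
    (PadicInt.isOpen_range_mulLeft_pow p m) ψ ?_, hψ⟩
  simp only [hψ]
  exact hφ.comp continuous_ofAdd

/-- every continuous homomorphism from the (additive, hence written
multiplicatively via `Multiplicative`) group `p^m ℤ_p` (`m > 0`) to the multiplicative
group of an algebraically closed field `L`, complete with respect to a `p`-adic absolute
value (a nonarchimedean norm with `‖p‖ = p⁻¹`), extends to a continuous homomorphism
`ℤ_p → Lˣ`. -/
theorem stmt_3 (p : ℕ) [Fact p.Prime] (m : ℕ) (hm : 0 < m)
    (L : Type) [NormedField L] [IsAlgClosed L] [CompleteSpace L] [IsUltrametricDist L]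
    (hL : ‖(p : L)‖ = (p : ℝ)⁻¹)
    (φ : Multiplicative ((AddMonoidHom.mulLeft ((p : ℤ_[p]) ^ m)).range) →* Lˣ)
    (hφ : Continuous φ) :
    ∃ ψ : Multiplicative ℤ_[p] →* Lˣ, Continuous ψ ∧
      ∀ x : (AddMonoidHom.mulLeft ((p : ℤ_[p]) ^ m)).range,
        ψ (Multiplicative.ofAdd (x : ℤ_[p])) = φ (Multiplicative.ofAdd x) :=
  stmt_3_general p m L φ hφ
end

section
/- Let N = N_tor ⊕ (⊕_{i=1}^d ℤ_p) be a topological abelian group, where N_tor is finite, and let N' = {0} ⊕ (⊕_{i=1}^d p^{m_i} ℤ_p) with integers m_i ≥ 0 be an open subgroup. Then every continuous character N' → \bar{ℚ}_p^× extends to a continuous character N → \bar{ℚ}_p^×. -/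
/-!
On `N' ≅ ℤ_[p]^d` a continuous character is the product of continuous characters of the
coordinates `ℤ_[p]`. Extending `ℤ → L` by continuity makes `L` a bounded `ℤ_[p]`-algebra, so by
Mahler's theorem the continuous characters of `ℤ_[p]` are exactly the maps `x ↦ b ^ x` with
`‖b - 1‖ < 1`. Hence the `i`-th coordinate character of `N'` is `p ^ mᵢ y ↦ cᵢ ^ y` with `cᵢ`
a principal unit, and it extends to `ℤ_[p]` as soon as `cᵢ` has a principal unit
`p ^ mᵢ`-th root `bᵢ`. Any root will do: modulo the maximal ideal `b ^ p - 1 = (b - 1) ^ p`.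
The extension is `(t, x) ↦ ∏ bᵢ ^ xᵢ`.
-/

namespace PadicInt

variable {p : ℕ} [Fact p.Prime] {L : Type*} [NormedField L] [IsUltrametricDist L]

lemma norm_intCast_le_norm_intCast (hL : ‖(p : L)‖ ≤ (p : ℝ)⁻¹) (k : ℤ) :
    ‖(k : L)‖ ≤ ‖(k : ℤ_[p])‖ := by
  rcases eq_or_ne (k : ℤ_[p]) 0 with hk | hk
  · simp [Int.cast_eq_zero.mp hk]
  set v := (k : ℤ_[p]).valuation
  have hkv : ‖(k : ℤ_[p])‖ = (p : ℝ) ^ (-v : ℤ) := norm_eq_zpow_neg_valuation hk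
  obtain ⟨u, hu⟩ := norm_int_le_pow_iff_dvd.mp hkv.le
  calc ‖(k : L)‖ = ‖(p : L)‖ ^ v * ‖(u : L)‖ := by rw [hu]; push_cast; rw [norm_mul, norm_pow]
    _ ≤ (p : ℝ)⁻¹ ^ v * 1 := by
      gcongr
      exact IsUltrametricDist.norm_intCast_le_one L u
    _ = ‖(k : ℤ_[p])‖ := by rw [hkv, mul_one, zpow_neg, zpow_natCast, inv_pow]

variable [CompleteSpace L]

theorem exists_ringHom_norm_le (hL : ‖(p : L)‖ ≤ (p : ℝ)⁻¹) :
    ∃ Φ : ℤ_[p] →+* L, ∀ x, ‖Φ x‖ ≤ ‖x‖ := by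
  let S : Subalgebra ℤ ℤ_[p] := ⊥
  let e : S ≃ₐ[ℤ] ℤ := Algebra.botEquivOfInjective Int.cast_injective
  have he (s : S) : ((e s : ℤ) : ℤ_[p]) = s := by
    simpa using congrArg Subtype.val (e.symm_apply_apply s)
  let f : S →+* L := (Int.castRingHom L).comp e.toRingEquiv.toRingHom
  have hfs (s : S) : ‖f s‖ ≤ ‖(s : ℤ_[p])‖ := by
    rw [← he s]
    exact norm_intCast_le_norm_intCast hL (e s)
  have hf : UniformContinuous f :=
    AddMonoidHomClass.uniformContinuous_of_bound f 1 fun s => (one_mul ‖s‖).symm ▸ hfs s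
  have ue : IsUniformInducing (S.val : S →+* ℤ_[p]) :=
    isUniformEmbedding_subtype_val.isUniformInducing
  have dr : DenseRange (S.val : S →+* ℤ_[p]) := by
    have : Set.range (S.val : S →+* ℤ_[p]) = Set.range (Int.cast : ℤ → ℤ_[p]) := by
      simp [S, Algebra.coe_bot]
    rw [DenseRange, this]
    exact denseRange_intCast
  let Φ := IsDenseInducing.extendRingHom ue dr hf
  have hΦ : Continuous Φ := (uniformContinuous_uniformly_extend ue dr hf).continuous
  refine ⟨Φ, fun x => ?_⟩
  refine dr.induction_on x (isClosed_le (continuous_norm.comp hΦ) continuous_norm) fun s => ?_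
  change ‖Φ s‖ ≤ ‖(s : ℤ_[p])‖
  rw [show Φ s = f s from (ue.isDenseInducing dr).extend_eq hf.continuous s]
  exact hfs s

theorem exists_continuous_addChar_eval_one_eq_iff (hL : ‖(p : L)‖ ≤ (p : ℝ)⁻¹) (b : L) :
    (∃ κ : AddChar ℤ_[p] L, Continuous κ ∧ κ 1 = b) ↔ ‖b - 1‖ < 1 := by
  obtain ⟨Φ, hΦ⟩ := exists_ringHom_norm_le hL
  let _ : Algebra ℤ_[p] L := Φ.toAlgebra
  have : IsBoundedSMul ℤ_[p] L := .of_norm_smul_le fun r x => by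
    rw [Algebra.smul_def, norm_mul]
    exact mul_le_mul_of_nonneg_right (hΦ r) (norm_nonneg x)
  constructor
  · rintro ⟨κ, hκ, rfl⟩
    exact tendsto_pow_atTop_nhds_zero_iff_norm_lt_one.mp (κ.tendsto_eval_one_sub_pow hκ)
  · intro hb
    have hr := tendsto_pow_atTop_nhds_zero_iff_norm_lt_one.mpr hb
    exact ⟨addChar_of_value_at_one _ hr, continuous_addChar_of_value_at_one hr, by simp⟩

end PadicInt

section PrincipalUnits

variable {p : ℕ} [hp : Fact p.Prime] {L : Type*} [NormedField L] [IsUltrametricDist L]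

lemma norm_sub_one_lt_one_of_norm_pow_sub_one_lt_one (hpL : ‖(p : L)‖ < 1) {b : L}
    (hb : ‖b‖ ≤ 1) (h : ‖b ^ p - 1‖ < 1) : ‖b - 1‖ < 1 := by
  have hb1 : ‖b - 1‖ ≤ 1 := by
    simpa [← sub_eq_add_neg, hb] using IsUltrametricDist.norm_add_le_max b (-1)
  set s : L := ∑ k ∈ Finset.Ioo 0 p, (b - 1) ^ k * 1 ^ (p - k) * ((p.choose k / p : ℕ) : L)
  have hs : ‖s‖ ≤ 1 := IsUltrametricDist.norm_sum_le_of_forall_le_of_nonneg zero_le_one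
    fun k _ => by
      rw [one_pow, mul_one, norm_mul, norm_pow]
      exact mul_le_one₀ (pow_le_one₀ (norm_nonneg _) hb1) (norm_nonneg _)
        (IsUltrametricDist.norm_natCast_le_one L _)
  have hbin : (b - 1) ^ p = (b ^ p - 1) + -(p * s) := by
    have := add_pow_prime_eq' hp.out (b - 1) 1
    rw [sub_add_cancel, one_pow] at this
    rw [this]; ring
  have hlt : ‖b - 1‖ ^ p < 1 := by
    rw [← norm_pow, hbin]
    refine (IsUltrametricDist.norm_add_le_max _ _).trans_lt (max_lt h ?_)
    rw [norm_neg, norm_mul]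
    exact mul_lt_one_of_nonneg_of_lt_one_left (norm_nonneg _) hpL hs
  exact (pow_lt_one_iff_of_nonneg (norm_nonneg _) hp.out.ne_zero).mp hlt

lemma norm_sub_one_lt_one_of_norm_pow_prime_pow_sub_one_lt_one (hpL : ‖(p : L)‖ < 1) {b : L}
    (hb : ‖b‖ ≤ 1) (n : ℕ) (h : ‖b ^ p ^ n - 1‖ < 1) : ‖b - 1‖ < 1 := by
  induction n with
  | zero => simpa using h
  | succ n ih =>
    refine ih (norm_sub_one_lt_one_of_norm_pow_sub_one_lt_one hpL ?_ ?_)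
    · rw [norm_pow]; exact pow_le_one₀ (norm_nonneg _) hb
    · rwa [← pow_mul, ← pow_succ]

lemma exists_pow_prime_pow_eq_of_norm_sub_one_lt_one [IsAlgClosed L] (hpL : ‖(p : L)‖ < 1)
    {c : L} (hc : ‖c - 1‖ < 1) (n : ℕ) : ∃ b : L, b ^ p ^ n = c ∧ ‖b - 1‖ < 1 := by
  obtain ⟨b, hbc⟩ := IsAlgClosed.exists_pow_nat_eq c (pow_pos hp.out.pos n)
  have hc1 : ‖c‖ ≤ 1 := by
    simpa [hc.le] using IsUltrametricDist.norm_add_one_le_max_norm_one (c - 1)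
  have hb1 : ‖b‖ ≤ 1 := by
    rw [← pow_le_one_iff_of_nonneg (norm_nonneg b) (pow_pos hp.out.pos n).ne', ← norm_pow, hbc]
    exact hc1
  exact ⟨b, hbc, norm_sub_one_lt_one_of_norm_pow_prime_pow_sub_one_lt_one hpL hb1 n (hbc ▸ hc)⟩

end PrincipalUnits

lemma AddChar.map_sum_eq_prod {A M ι : Type*} [AddCommMonoid A] [CommMonoid M]
    (χ : AddChar A M) (s : Finset ι) (f : ι → A) : χ (∑ i ∈ s, f i) = ∏ i ∈ s, χ (f i) := by
  have := map_prod χ.toMonoidHom (fun i => Multiplicative.ofAdd (f i)) s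
  rwa [← ofAdd_sum] at this

lemma AddChar.continuous_toHomUnits {A M : Type*} [AddGroup A] [TopologicalSpace A]
    [ContinuousNeg A] [Monoid M] [TopologicalSpace M] {κ : AddChar A M} (hκ : Continuous κ) :
    Continuous κ.toMonoidHom.toHomUnits := by
  rw [Units.continuous_iff]
  refine ⟨hκ.comp continuous_toAdd, ?_⟩
  simp only [← map_inv, MonoidHom.coe_toHomUnits, AddChar.toMonoidHom_apply, toAdd_inv]
  exact hκ.comp continuous_toAdd.neg

section Characters

variable {p : ℕ} [hp : Fact p.Prime] {L : Type*} [NormedField L] [IsAlgClosed L]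
  [CompleteSpace L] [IsUltrametricDist L]

theorem exists_continuous_addChar_comp_mul_pow (hL : ‖(p : L)‖ ≤ (p : ℝ)⁻¹)
    (χ : AddChar ℤ_[p] L) (hχ : Continuous χ) (n : ℕ) :
    ∃ κ : AddChar ℤ_[p] L, Continuous κ ∧ ∀ y, κ (p ^ n * y) = χ y := by
  have hpL : ‖(p : L)‖ < 1 :=
    hL.trans_lt (inv_lt_one_of_one_lt₀ (mod_cast hp.out.one_lt))
  obtain ⟨b, hbχ, hb⟩ := exists_pow_prime_pow_eq_of_norm_sub_one_lt_one hpL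
    ((PadicInt.exists_continuous_addChar_eval_one_eq_iff hL _).mp ⟨χ, hχ, rfl⟩) n
  obtain ⟨κ, hκ, hκb⟩ := (PadicInt.exists_continuous_addChar_eval_one_eq_iff hL b).mpr hb
  have hκχ : κ.compAddMonoidHom (AddMonoidHom.mulLeft ((p : ℤ_[p]) ^ n)) = χ := by
    refine PadicInt.denseRange_natCast.addChar_eq_of_eval_one_eq
      (hκ.comp (continuous_const_mul _)) hχ ?_
    rw [AddChar.compAddMonoidHom_apply, AddMonoidHom.coe_mulLeft, mul_one, ← hbχ, ← hκb,
      ← AddChar.map_nsmul_eq_pow, nsmul_one, Nat.cast_pow]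
  exact ⟨κ, hκ, fun y => DFunLike.congr_fun hκχ y⟩

theorem exists_continuous_addChar_pi_comp_mul_pow {ι : Type*} [Fintype ι]
    (hL : ‖(p : L)‖ ≤ (p : ℝ)⁻¹) (χ : AddChar (ι → ℤ_[p]) L) (hχ : Continuous χ) (m : ι → ℕ) :
    ∃ κ : AddChar (ι → ℤ_[p]) L, Continuous κ ∧ ∀ y, κ (fun i => p ^ m i * y i) = χ y := by
  classical
  choose κ hκ hκχ using fun i => exists_continuous_addChar_comp_mul_pow hL
    (χ.compAddMonoidHom (AddMonoidHom.single (fun _ => ℤ_[p]) i))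
    (hχ.comp (continuous_single (A := fun _ : ι => ℤ_[p]) i)) (m i)
  let K : AddChar (ι → ℤ_[p]) L := ∏ i, (κ i).compAddMonoidHom (Pi.evalAddMonoidHom _ i)
  have hK (y : ι → ℤ_[p]) : K y = ∏ i, κ i (y i) := by simp [K, AddChar.prod_apply]
  refine ⟨K, ?_, fun y => ?_⟩
  · exact (continuous_finsetProd _ fun i _ => (hκ i).comp (continuous_apply i)).congr
      fun y => (hK y).symm
  · simp only [hK, hκχ, AddChar.compAddMonoidHom_apply, AddMonoidHom.single_apply]
    rw [← AddChar.map_sum_eq_prod, Finset.univ_sum_single]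

end Characters

theorem stmt_4_general (p : ℕ) [Fact p.Prime] (d : ℕ)
    (T : Type) [AddCommGroup T] [TopologicalSpace T]
    (m : Fin d → ℕ)
    (L : Type) [NormedField L] [IsAlgClosed L] [CompleteSpace L] [IsUltrametricDist L]
    (hL : ‖(p : L)‖ = (p : ℝ)⁻¹)
    (N' : AddSubgroup (T × (Fin d → ℤ_[p])))
    (hN' : N' = AddSubgroup.prod ⊥ (AddSubgroup.pi Set.univ
      fun i => (AddMonoidHom.mulLeft ((p : ℤ_[p]) ^ (m i))).range))
    (φ : Multiplicative N' →* Lˣ) (hφ : Continuous φ) :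
    ∃ ψ : Multiplicative (T × (Fin d → ℤ_[p])) →* Lˣ, Continuous ψ ∧
      ∀ x : N', ψ (Multiplicative.ofAdd (x : T × (Fin d → ℤ_[p]))) =
        φ (Multiplicative.ofAdd x) := by
  let ι : (Fin d → ℤ_[p]) →+ T × (Fin d → ℤ_[p]) := (AddMonoidHom.inr T _).comp <|
    AddMonoidHom.pi fun i => (AddMonoidHom.mulLeft ((p : ℤ_[p]) ^ m i)).comp
      (Pi.evalAddMonoidHom _ i)
  have hι : ι.range = N' := by
    subst hN'
    ext ⟨t, x⟩
    simp only [ι, AddMonoidHom.mem_range, AddMonoidHom.coe_comp, Function.comp_apply,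
      AddMonoidHom.inr_apply, Prod.ext_iff, funext_iff, AddMonoidHom.pi_apply,
      AddMonoidHom.coe_mulLeft, Pi.evalAddMonoidHom_apply, exists_and_left, AddSubgroup.mem_prod,
      AddSubgroup.mem_bot, AddSubgroup.mem_pi, Set.mem_univ, forall_const]
    rw [Classical.skolem, eq_comm]
  have hι_cont : Continuous ι :=
    continuous_const.prodMk (continuous_pi fun i => continuous_const.mul (continuous_apply i))
  let χ : AddChar (Fin d → ℤ_[p]) L :=
    ((Units.coeHom L).compAddChar (AddChar.toMonoidHomEquiv.symm φ)).compAddMonoidHom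
      (ι.codRestrict N' fun y => hι ▸ AddMonoidHom.mem_range.mpr ⟨y, rfl⟩)
  have hχ : Continuous χ :=
    Units.continuous_val.comp (hφ.comp (continuous_ofAdd.comp (hι_cont.subtype_mk _)))
  obtain ⟨κ, hκ, hκχ⟩ := exists_continuous_addChar_pi_comp_mul_pow hL.le χ hχ m
  refine ⟨κ.toMonoidHom.toHomUnits.comp (AddMonoidHom.snd T _).toMultiplicative,
    (AddChar.continuous_toHomUnits hκ).comp
      (continuous_ofAdd.comp (continuous_snd.comp continuous_toAdd)), ?_⟩
  rintro ⟨x, hx⟩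
  obtain ⟨y, rfl⟩ := hι ▸ hx
  exact Units.ext (hκχ y)

/-- Let `N = N_tor ⊕ (⊕_{i=1}^d ℤ_p)` with `N_tor` finite, and let
`N' = {0} ⊕ (⊕_i p^{m_i} ℤ_p)` (an open subgroup).  Every continuous character
`N' → \bar{ℚ}_p^×` (valued in an algebraically closed complete nonarchimedean field `L`
with `‖p‖ = p⁻¹`) extends to a continuous character of `N`. -/
theorem stmt_4 (p : ℕ) [Fact p.Prime] (d : ℕ)
    (T : Type) [AddCommGroup T] [Finite T] [TopologicalSpace T] [DiscreteTopology T]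
    (m : Fin d → ℕ)
    (L : Type) [NormedField L] [IsAlgClosed L] [CompleteSpace L] [IsUltrametricDist L]
    (hL : ‖(p : L)‖ = (p : ℝ)⁻¹)
    (N' : AddSubgroup (T × (Fin d → ℤ_[p])))
    (hN' : N' = AddSubgroup.prod ⊥ (AddSubgroup.pi Set.univ
      fun i => (AddMonoidHom.mulLeft ((p : ℤ_[p]) ^ (m i))).range))
    (φ : Multiplicative N' →* Lˣ) (hφ : Continuous φ) :
    ∃ ψ : Multiplicative (T × (Fin d → ℤ_[p])) →* Lˣ, Continuous ψ ∧
      ∀ x : N', ψ (Multiplicative.ofAdd (x : T × (Fin d → ℤ_[p]))) =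
        φ (Multiplicative.ofAdd x) :=
  stmt_4_general p d T m L hL N' hN' φ hφ
end
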